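/- arXiv:1709.10305 — 5 statements merged into one kernel-verified Lean document; each statement's English description precedes it below -/
import Mathlib

section
/- If ψ is an optimal graph mapping from graph G to graph Q (i.e., its induced edit path has minimum length among all graph mappings), then the length of ψ, i.e., the size of the extended vertex set on which ψ acts, equals max{|V_G|, |V_Q|}. Equivalently, an optimal mapping never simultaneously maps a real vertex of G to a dummy vertex and a dummy vertex to a real vertex of Q. -/
open scoped Classical

/-- A labeled simple undirected graph: a finite vertex set, a finite set of
non-loop edges between its vertices, and vertex/edge labeling functions into `L`. -/
structure LGraph (V L : Type*) where
  verts : Finset V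
  edges : Finset (Sym2 V)
  loopless : ∀ e ∈ edges, ¬ e.IsDiag
  edge_verts : ∀ e ∈ edges, ∀ x ∈ e, x ∈ verts
  vlab : V → L
  elabel : Sym2 V → L

variable {α β L : Type*}

/-- A graph mapping from `G` to `Q`, presented by its real-to-real part: `D` is the set of
vertices of `G` matched to real vertices of `Q` via the injective assignment `ψ`
(vertices of `G` outside `D` are mapped to dummy vertices, and vertices of `Q` outside
`ψ '' D` are images of dummy vertices; no dummy is mapped to a dummy). -/
def IsMapping (G : LGraph α L) (Q : LGraph β L) (D : Finset α) (ψ : α → β) : Prop :=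
  D ⊆ G.verts ∧ Set.InjOn ψ ↑D ∧ ∀ u ∈ D, ψ u ∈ Q.verts

/-- `V_H`: the vertex set of the common unlabeled subgraph induced by the mapping,
`{u ∈ V_G : ψ(u) ∈ V_Q}`. -/
noncomputable def VH (G : LGraph α L) (D : Finset α) : Finset α := G.verts ∩ D

/-- `E_H`: the edge set of the common unlabeled subgraph induced by the mapping,
`{e(u,v) ∈ E_G : e(ψ(u),ψ(v)) ∈ E_Q}` (both endpoints matched to real vertices). -/
noncomputable def EH (G : LGraph α L) (Q : LGraph β L) (D : Finset α) (ψ : α → β) :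
    Finset (Sym2 α) :=
  G.edges.filter fun e => (∀ x ∈ e, x ∈ D) ∧ Sym2.map ψ e ∈ Q.edges

/-- `C_D(ψ) = (|V_G| − |V_H|) + (|E_G| − |E_H|)`. -/
noncomputable def CD (G : LGraph α L) (Q : LGraph β L) (D : Finset α) (ψ : α → β) : ℕ :=
  (G.verts.card - (VH G D).card) + (G.edges.card - (EH G Q D ψ).card)

/-- `C_I(ψ) = (|V_Q| − |V_H|) + (|E_Q| − |E_H|)`. -/
noncomputable def CI (G : LGraph α L) (Q : LGraph β L) (D : Finset α) (ψ : α → β) : ℕ :=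
  (Q.verts.card - (VH G D).card) + (Q.edges.card - (EH G Q D ψ).card)

/-- `C_S(ψ)`: the number of vertices `u ∈ V_H` with `L(u) ≠ L(ψ(u))` plus the number of
edges `e(u,v) ∈ E_H` with `L(e(u,v)) ≠ L(e(ψ(u),ψ(v)))`. -/
noncomputable def CS (G : LGraph α L) (Q : LGraph β L) (D : Finset α) (ψ : α → β) : ℕ :=
  ((VH G D).filter fun u => G.vlab u ≠ Q.vlab (ψ u)).card +
    ((EH G Q D ψ).filter fun e => G.elabel e ≠ Q.elabel (Sym2.map ψ e)).card

/-- The cost of (the edit path induced by) a graph mapping, `C_D + C_I + C_S`. -/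
noncomputable def mapCost (G : LGraph α L) (Q : LGraph β L) (D : Finset α)
    (ψ : α → β) : ℕ :=
  CD G Q D ψ + CI G Q D ψ + CS G Q D ψ

/-- Theorem 2: if `ψ` is an optimal graph mapping from `G` to `Q` (its
induced edit path has minimum cost among all graph mappings), then its length
`|ψ| = |V_G^*|`, the size of the extended vertex set on which it acts — namely `|V_G|`
real vertices of `G` plus `|V_Q| − |D|` dummy vertices mapped to the unmatched real
vertices of `Q` — equals `max{|V_G|, |V_Q|}`; equivalently, an optimal mapping never
simultaneously maps a real vertex of `G` to a dummy and a dummy to a real vertex of `Q`. -/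
theorem stmt1 (G : LGraph α L) (Q : LGraph β L) (D : Finset α) (ψ : α → β)
    (h : IsMapping G Q D ψ)
    (hopt : ∀ (D' : Finset α) (ψ' : α → β), IsMapping G Q D' ψ' →
      mapCost G Q D ψ ≤ mapCost G Q D' ψ') :
    G.verts.card + (Q.verts.card - D.card) = max G.verts.card Q.verts.card := by
  classical
  have hD : D ⊆ G.verts := h.1
  have hVH : VH G D = D := Finset.inter_eq_right.mpr hD
  have hdle_a : D.card ≤ G.verts.card := Finset.card_le_card hD
  have himg : D.image ψ ⊆ Q.verts := by
    intro y hy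
    obtain ⟨u, hu, rfl⟩ := Finset.mem_image.mp hy
    exact h.2.2 u hu
  have himgcard : (D.image ψ).card = D.card := Finset.card_image_of_injOn h.2.1
  have hdle_b : D.card ≤ Q.verts.card := himgcard ▸ Finset.card_le_card himg
  have key : D.card = G.verts.card ∨ D.card = Q.verts.card := by
    by_contra hcon
    push_neg at hcon
    have ha : D.card < G.verts.card := lt_of_le_of_ne hdle_a hcon.1
    have hb : D.card < Q.verts.card := lt_of_le_of_ne hdle_b hcon.2
    obtain ⟨x, hxG, hxD⟩ : ∃ x ∈ G.verts, x ∉ D := by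
      by_contra hc
      push_neg at hc
      exact absurd (Finset.card_le_card hc) (not_le.mpr ha)
    obtain ⟨y, hyQ, hyI⟩ : ∃ y ∈ Q.verts, y ∉ D.image ψ := by
      by_contra hc
      push_neg at hc
      have := Finset.card_le_card hc
      omega
    set ψ' := Function.update ψ x y with hψ'def
    set D' := insert x D with hD'def
    have hψ'D : ∀ u ∈ D, ψ' u = ψ u := fun u hu =>
      Function.update_of_ne (fun he => hxD (by rw [← he]; exact hu)) _ _
    have hψ'x : ψ' x = y := Function.update_self _ _ _
    have hmap' : IsMapping G Q D' ψ' := by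
      refine ⟨Finset.insert_subset hxG hD, ?_, ?_⟩
      · intro u hu v hv huv
        simp only [hD'def, Finset.coe_insert, Set.mem_insert_iff, Finset.mem_coe] at hu hv
        rcases hu with rfl | hu <;> rcases hv with rfl | hv
        · rfl
        · exfalso
          rw [hψ'x, hψ'D v hv] at huv
          exact hyI (Finset.mem_image.mpr ⟨v, hv, huv.symm⟩)
        · exfalso
          rw [hψ'x, hψ'D u hu] at huv
          exact hyI (Finset.mem_image.mpr ⟨u, hu, huv⟩)
        · exact h.2.1 hu hv (by rwa [hψ'D u hu, hψ'D v hv] at huv)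
      · intro u hu
        rcases Finset.mem_insert.mp hu with rfl | hu
        · rw [hψ'x]; exact hyQ
        · rw [hψ'D u hu]; exact h.2.2 u hu
    have hVH' : VH G D' = D' := Finset.inter_eq_right.mpr hmap'.1
    have hcardD' : D'.card = D.card + 1 := Finset.card_insert_of_notMem hxD
    -- maps agree on edges of EH
    have hmapeq : ∀ e ∈ EH G Q D ψ, Sym2.map ψ' e = Sym2.map ψ e := by
      intro e he
      have h1 := (Finset.mem_filter.mp he).2.1
      exact Sym2.map_congr fun z hz => hψ'D z (h1 z hz)
    have hEHsub : EH G Q D ψ ⊆ EH G Q D' ψ' := by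
      intro e he
      have h0 := Finset.mem_filter.mp he
      refine Finset.mem_filter.mpr ⟨h0.1, fun z hz => Finset.mem_insert_of_mem (h0.2.1 z hz), ?_⟩
      rw [hmapeq e he]
      exact h0.2.2
    have hEH'G : EH G Q D' ψ' ⊆ G.edges := Finset.filter_subset _ _
    have hEHG : (EH G Q D ψ).card ≤ G.edges.card :=
      Finset.card_le_card (Finset.filter_subset _ _)
    have hEH'card : (EH G Q D' ψ').card ≤ G.edges.card := Finset.card_le_card hEH'G
    have hEHle : (EH G Q D ψ).card ≤ (EH G Q D' ψ').card := Finset.card_le_card hEHsub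
    -- CS vertex bound
    have hCSv : ((VH G D').filter fun u => G.vlab u ≠ Q.vlab (ψ' u)).card ≤
        ((VH G D).filter fun u => G.vlab u ≠ Q.vlab (ψ u)).card + 1 := by
      rw [hVH', hVH]
      have hsub : (D'.filter fun u => G.vlab u ≠ Q.vlab (ψ' u)) ⊆
          insert x (D.filter fun u => G.vlab u ≠ Q.vlab (ψ u)) := by
        intro u hu
        have h0 := Finset.mem_filter.mp hu
        rcases Finset.mem_insert.mp h0.1 with rfl | hu'
        · exact Finset.mem_insert_self _ _
        · refine Finset.mem_insert_of_mem (Finset.mem_filter.mpr ⟨hu', ?_⟩)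
          rw [hψ'D u hu'] at h0
          exact h0.2
      calc (D'.filter fun u => G.vlab u ≠ Q.vlab (ψ' u)).card
          ≤ (insert x (D.filter fun u => G.vlab u ≠ Q.vlab (ψ u))).card :=
            Finset.card_le_card hsub
        _ ≤ _ := Finset.card_insert_le _ _
    -- CS edge bound
    have hCSe : ((EH G Q D' ψ').filter fun e => G.elabel e ≠ Q.elabel (Sym2.map ψ' e)).card ≤
        ((EH G Q D ψ).filter fun e => G.elabel e ≠ Q.elabel (Sym2.map ψ e)).card +
          ((EH G Q D' ψ').card - (EH G Q D ψ).card) := by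
      have hsub : ((EH G Q D' ψ').filter fun e => G.elabel e ≠ Q.elabel (Sym2.map ψ' e)) ⊆
          ((EH G Q D ψ).filter fun e => G.elabel e ≠ Q.elabel (Sym2.map ψ e)) ∪
            (EH G Q D' ψ' \ EH G Q D ψ) := by
        intro e he
        have h0 := Finset.mem_filter.mp he
        by_cases heH : e ∈ EH G Q D ψ
        · refine Finset.mem_union_left _ (Finset.mem_filter.mpr ⟨heH, ?_⟩)
          rw [hmapeq e heH] at h0
          exact h0.2
        · exact Finset.mem_union_right _ (Finset.mem_sdiff.mpr ⟨h0.1, heH⟩)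
      calc ((EH G Q D' ψ').filter fun e => G.elabel e ≠ Q.elabel (Sym2.map ψ' e)).card
          ≤ _ := Finset.card_le_card hsub
        _ ≤ _ + (EH G Q D' ψ' \ EH G Q D ψ).card := Finset.card_union_le _ _
        _ = _ := by rw [Finset.card_sdiff_of_subset hEHsub]
    have hle := hopt D' ψ' hmap'
    unfold mapCost CD CI CS at hle
    rw [hVH, hVH', hcardD'] at hle
    -- derive contradiction arithmetically
    set eh := (EH G Q D ψ).card
    set eh' := (EH G Q D' ψ').card
    rw [hVH, hVH'] at hCSv
    set cv := (D.filter fun u => G.vlab u ≠ Q.vlab (ψ u)).card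
    set cv' := (D'.filter fun u => G.vlab u ≠ Q.vlab (ψ' u)).card
    set ce := ((EH G Q D ψ).filter fun e => G.elabel e ≠ Q.elabel (Sym2.map ψ e)).card
    set ce' := ((EH G Q D' ψ').filter fun e => G.elabel e ≠ Q.elabel (Sym2.map ψ' e)).card
    omega
  rcases key with hk | hk <;> omega
end

section
/- If two graph mappings ψ and ψ' from G to Q have the same canonical code (i.e., for every l, the mapped vertices ψ(u_{i_l}) and ψ'(u_{i_l}) lie in the same vertex-isomorphism equivalence class of Q, or are both dummy), then the common subgraphs H and H' they induce are equal: V_H = V_{H'} and E_H = E_{H'}. -/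
open scoped Classical

variable {α β L : Type*}

/-- Neighborhood information `N_Q(u) = {(v, L(e(u,v))) : e(u,v) ∈ E_Q}` of a vertex of `Q`. -/
def Nbhd (Q : LGraph β L) (u : β) : Set (β × L) :=
  {p | s(u, p.1) ∈ Q.edges ∧ p.2 = Q.elabel s(u, p.1)}

/-- Vertex isomorphism `u ∼ v` in `Q`: same vertex label and same neighborhood
information; its equivalence classes partition `V_Q` (dummies form their own class). -/
def VIso (Q : LGraph β L) (u v : β) : Prop :=
  Q.vlab u = Q.vlab v ∧ Nbhd Q u = Nbhd Q v

/-- Two graph mappings have the same canonical code: each processed vertex of `G` is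
either matched to isomorphic (same-class) real vertices of `Q` under both mappings,
or mapped to a dummy under both. -/
def SameCode (G : LGraph α L) (Q : LGraph β L) (D D' : Finset α) (ψ ψ' : α → β) : Prop :=
  ∀ u ∈ G.verts, (u ∈ D ↔ u ∈ D') ∧ (u ∈ D → VIso Q (ψ u) (ψ' u))

/-- if two graph mappings `ψ` and `ψ'` from `G` to `Q` have the same
canonical code, then they induce the same common subgraph `H`:
`V_H = V_{H'}` and `E_H = E_{H'}`. -/
theorem stmt3 (G : LGraph α L) (Q : LGraph β L) (D D' : Finset α) (ψ ψ' : α → β)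
    (h : IsMapping G Q D ψ) (h' : IsMapping G Q D' ψ')
    (hcode : SameCode G Q D D' ψ ψ') :
    VH G D = VH G D' ∧ EH G Q D ψ = EH G Q D' ψ' := by
  have key : ∀ (D D' : Finset α) (ψ ψ' : α → β),
      SameCode G Q D D' ψ ψ' → ∀ u v : α, u ∈ G.verts → v ∈ G.verts → u ∈ D → v ∈ D →
      s(ψ u, ψ v) ∈ Q.edges → s(ψ' u, ψ' v) ∈ Q.edges := by
    intro D D' ψ ψ' hc u v hu hv huD hvD he
    obtain ⟨_, hNu⟩ := (hc u hu).2 huD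
    obtain ⟨_, hNv⟩ := (hc v hv).2 hvD
    have h1 : (ψ v, Q.elabel s(ψ u, ψ v)) ∈ Nbhd Q (ψ u) := ⟨he, rfl⟩
    rw [hNu] at h1
    obtain ⟨he1, -⟩ := h1
    have h2 : (ψ' u, Q.elabel s(ψ v, ψ' u)) ∈ Nbhd Q (ψ v) := by
      refine ⟨?_, rfl⟩
      rwa [Sym2.eq_swap]
    rw [hNv] at h2
    obtain ⟨he2, -⟩ := h2
    rwa [Sym2.eq_swap]
  have hVH : VH G D = VH G D' := by
    ext u
    simp only [VH, Finset.mem_inter]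
    exact and_congr_right fun hu => (hcode u hu).1
  refine ⟨hVH, ?_⟩
  have hcode' : SameCode G Q D' D ψ' ψ := by
    intro u hu
    exact ⟨(hcode u hu).1.symm, fun hu' => ⟨((hcode u hu).2 ((hcode u hu).1.2 hu')).1.symm,
      ((hcode u hu).2 ((hcode u hu).1.2 hu')).2.symm⟩⟩
  ext e
  simp only [EH, Finset.mem_filter]
  induction e using Sym2.ind with
  | _ u v =>
    constructor
    · rintro ⟨heG, hmem, hQ⟩
      have hu : u ∈ G.verts := G.edge_verts _ heG u (by simp)
      have hv : v ∈ G.verts := G.edge_verts _ heG v (by simp)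
      have huD : u ∈ D := hmem u (by simp)
      have hvD : v ∈ D := hmem v (by simp)
      refine ⟨heG, ?_, ?_⟩
      · intro x hx
        rcases Sym2.mem_iff.mp hx with rfl | rfl
        · exact (hcode x hu).1.1 huD
        · exact (hcode x hv).1.1 hvD
      · simpa using key D D' ψ ψ' hcode u v hu hv huD hvD (by simpa using hQ)
    · rintro ⟨heG, hmem, hQ⟩
      have hu : u ∈ G.verts := G.edge_verts _ heG u (by simp)
      have hv : v ∈ G.verts := G.edge_verts _ heG v (by simp)
      have huD : u ∈ D' := hmem u (by simp)
      have hvD : v ∈ D' := hmem v (by simp)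
      refine ⟨heG, ?_, ?_⟩
      · intro x hx
        rcases Sym2.mem_iff.mp hx with rfl | rfl
        · exact (hcode x hu).1.2 huD
        · exact (hcode x hv).1.2 hvD
      · simpa using key D' D ψ' ψ hcode' u v hu hv huD hvD (by simpa using hQ)
end

section
/- If two graph mappings ψ and ψ' from G to Q have the same canonical code, then their induced edit paths have equal lengths: |P_ψ| = |P_{ψ'}|. -/
open scoped Classical

variable {α β L : Type*}

/-- Theorem 3: if two graph mappings `ψ` and `ψ'` from `G` to `Q` have the
same canonical code, then their induced edit paths have equal lengths:
`|P_ψ| = C_D(ψ)+C_I(ψ)+C_S(ψ) = C_D(ψ')+C_I(ψ')+C_S(ψ') = |P_{ψ'}|`. -/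
theorem stmt4 (G : LGraph α L) (Q : LGraph β L) (D D' : Finset α) (ψ ψ' : α → β)
    (h : IsMapping G Q D ψ) (h' : IsMapping G Q D' ψ')
    (hcode : SameCode G Q D D' ψ ψ') :
    CD G Q D ψ + CI G Q D ψ + CS G Q D ψ
      = CD G Q D' ψ' + CI G Q D' ψ' + CS G Q D' ψ' := by
  obtain ⟨hD, -, -⟩ := h
  obtain ⟨hD', -, -⟩ := h'
  have hDD : D = D' := by
    ext u
    constructor
    · intro hu; exact ((hcode u (hD hu)).1).mp hu
    · intro hu; exact ((hcode u (hD' hu)).1).mpr hu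
  subst hDD
  have step : ∀ (a b c : β), Nbhd Q a = Nbhd Q b → s(a, c) ∈ Q.edges →
      s(b, c) ∈ Q.edges ∧ Q.elabel s(a, c) = Q.elabel s(b, c) := by
    intro a b c hab hc
    have h1 : (c, Q.elabel s(a, c)) ∈ Nbhd Q a := ⟨hc, rfl⟩
    rw [hab] at h1
    exact ⟨h1.1, h1.2⟩
  have key : ∀ u ∈ D, ∀ v ∈ D, s(ψ u, ψ v) ∈ Q.edges →
      s(ψ' u, ψ' v) ∈ Q.edges ∧ Q.elabel s(ψ u, ψ v) = Q.elabel s(ψ' u, ψ' v) := by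
    intro u hu v hv he
    have hNu := (((hcode u (hD hu)).2) hu).2
    have hNv := (((hcode v (hD hv)).2) hv).2
    obtain ⟨h1e, h1l⟩ := step _ _ _ hNu he
    rw [Sym2.eq_swap (a := ψ' u)] at h1e
    obtain ⟨h2e, h2l⟩ := step _ _ _ hNv h1e
    rw [Sym2.eq_swap (a := ψ' v)] at h2e
    refine ⟨h2e, ?_⟩
    calc Q.elabel s(ψ u, ψ v) = Q.elabel s(ψ' u, ψ v) := h1l
      _ = Q.elabel s(ψ v, ψ' u) := by rw [Sym2.eq_swap]
      _ = Q.elabel s(ψ' v, ψ' u) := h2l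
      _ = Q.elabel s(ψ' u, ψ' v) := by rw [Sym2.eq_swap]
  have key' : ∀ u ∈ D, ∀ v ∈ D, s(ψ' u, ψ' v) ∈ Q.edges → s(ψ u, ψ v) ∈ Q.edges := by
    intro u hu v hv he
    have hNu := (((hcode u (hD hu)).2) hu).2
    have hNv := (((hcode v (hD hv)).2) hv).2
    obtain ⟨h1e, -⟩ := step _ _ _ hNu.symm he
    rw [Sym2.eq_swap (a := ψ u)] at h1e
    obtain ⟨h2e, -⟩ := step _ _ _ hNv.symm h1e
    rw [Sym2.eq_swap (a := ψ v)] at h2e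
    exact h2e
  have hEH : EH G Q D ψ = EH G Q D ψ' := by
    unfold EH
    apply Finset.filter_congr
    intro e _
    induction e using Sym2.inductionOn with
    | hf u v =>
      simp only [Sym2.map_pair_eq, Sym2.mem_iff, forall_eq_or_imp, forall_eq]
      constructor
      · rintro ⟨⟨hu, hv⟩, hq⟩
        exact ⟨⟨hu, hv⟩, (key u hu v hv hq).1⟩
      · rintro ⟨⟨hu, hv⟩, hq⟩
        exact ⟨⟨hu, hv⟩, key' u hu v hv hq⟩
  have hvf : (VH G D).filter (fun u => G.vlab u ≠ Q.vlab (ψ u))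
      = (VH G D).filter (fun u => G.vlab u ≠ Q.vlab (ψ' u)) := by
    apply Finset.filter_congr
    intro u hu
    have huD : u ∈ D := (Finset.mem_inter.mp hu).2
    have huG : u ∈ G.verts := (Finset.mem_inter.mp hu).1
    rw [(((hcode u huG).2) huD).1]
  have hef : (EH G Q D ψ).filter (fun e => G.elabel e ≠ Q.elabel (Sym2.map ψ e))
      = (EH G Q D ψ').filter (fun e => G.elabel e ≠ Q.elabel (Sym2.map ψ' e)) := by
    rw [← hEH]
    apply Finset.filter_congr
    intro e he
    unfold EH at he
    rw [Finset.mem_filter] at he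
    induction e using Sym2.inductionOn with
    | hf u v =>
      obtain ⟨-, hmem, hq⟩ := he
      rw [Sym2.map_pair_eq] at hq
      have hu : u ∈ D := hmem u (Sym2.mem_mk_left u v)
      have hv : v ∈ D := hmem v (Sym2.mem_mk_right u v)
      rw [Sym2.map_pair_eq, Sym2.map_pair_eq, (key u hu v hv hq).2]
  unfold CD CI CS
  rw [hvf, hef, hEH]
end

section
/- Any edit path transforming a graph G into a graph Q contains at least max{|V_G|, |V_Q|} − |Σ_{V_G} ∩ Σ_{V_Q}| edit operations performed on vertices, where Σ_{V_G} and Σ_{V_Q} are the multisets of vertex labels and ∩ is multiset intersection. -/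
/-- A single vertex edit operation on the multiset of vertex labels:
insert one element, delete one element, or replace one element. -/
def VertexStep {α : Type*} (x y : Multiset α) : Prop :=
  (∃ a, y = a ::ₘ x) ∨ (∃ a, x = a ::ₘ y) ∨ (∃ a b z, x = a ::ₘ z ∧ y = b ::ₘ z)

lemma inter_cons_card_le {α : Type*} [DecidableEq α] (a : α) (z B : Multiset α) :
    Multiset.card ((a ::ₘ z) ∩ B) ≤ Multiset.card (z ∩ B) + 1 := by
  have h : (a ::ₘ z) ∩ B ≤ a ::ₘ (z ∩ B) := by
    rw [Multiset.le_iff_count]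
    intro b
    simp only [Multiset.count_inter, Multiset.count_cons]
    split <;> omega
  calc Multiset.card ((a ::ₘ z) ∩ B) ≤ Multiset.card (a ::ₘ (z ∩ B)) :=
        Multiset.card_le_card h
    _ = Multiset.card (z ∩ B) + 1 := by simp

lemma card_inter_le_inter_cons {α : Type*} [DecidableEq α] (a : α) (z B : Multiset α) :
    Multiset.card (z ∩ B) ≤ Multiset.card ((a ::ₘ z) ∩ B) := by
  apply Multiset.card_le_card
  rw [Multiset.le_iff_count]
  intro b
  simp only [Multiset.count_inter, Multiset.count_cons]
  split <;> omega

lemma step_phi {α : Type*} [DecidableEq α] (B x y : Multiset α) (h : VertexStep x y) :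
    max (Multiset.card x) (Multiset.card B) - Multiset.card (x ∩ B) ≤
      (max (Multiset.card y) (Multiset.card B) - Multiset.card (y ∩ B)) + 1 := by
  have hx1 : Multiset.card (x ∩ B) ≤ Multiset.card x :=
    Multiset.card_le_card Multiset.inter_le_left
  have hy1 : Multiset.card (y ∩ B) ≤ Multiset.card y :=
    Multiset.card_le_card Multiset.inter_le_left
  have hyB : Multiset.card (y ∩ B) ≤ Multiset.card B :=
    Multiset.card_le_card Multiset.inter_le_right
  rcases h with ⟨a, rfl⟩ | ⟨a, rfl⟩ | ⟨a, b, z, rfl, rfl⟩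
  · have h1 := card_inter_le_inter_cons a x B
    have h2 := inter_cons_card_le a x B
    simp only [Multiset.card_cons, Nat.max_def] at *
    split_ifs at * <;> omega
  · have h1 := inter_cons_card_le a y B
    have h2 := card_inter_le_inter_cons a y B
    simp only [Multiset.card_cons, Nat.max_def] at *
    split_ifs at * <;> omega
  · have h1 := inter_cons_card_le a z B
    have h2 := card_inter_le_inter_cons b z B
    have h3 := inter_cons_card_le b z B
    have h4 := card_inter_le_inter_cons a z B
    simp only [Multiset.card_cons, Nat.max_def] at *
    split_ifs at * <;> omega

/-- any edit path transforming the vertex-label multiset `A` of `G` into the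
vertex-label multiset `B` of `Q` by single-element insertions, deletions and replacements
uses at least `max{|V_G|,|V_Q|} − |Σ_{V_G} ∩ Σ_{V_Q}|` operations. -/
theorem stmt12 {α : Type*} [DecidableEq α] (A B : Multiset α) (k : ℕ)
    (f : ℕ → Multiset α) (h0 : f 0 = A) (hk : f k = B)
    (hstep : ∀ i < k, VertexStep (f i) (f (i + 1))) :
    max (Multiset.card A) (Multiset.card B) - Multiset.card (A ∩ B) ≤ k := by
  have key : ∀ i ≤ k,
      max (Multiset.card (f (k - i))) (Multiset.card B) -
        Multiset.card ((f (k - i)) ∩ B) ≤ i := by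
    intro i
    induction i with
    | zero =>
      intro _
      have hBB : B ∩ B = B := le_antisymm Multiset.inter_le_left
        (Multiset.le_inter le_rfl le_rfl)
      simp [hk, hBB]
    | succ n ih =>
      intro hn
      have h1 : k - (n + 1) < k := by omega
      have h2 : k - (n + 1) + 1 = k - n := by omega
      have := step_phi B (f (k - (n + 1))) (f (k - (n + 1) + 1)) (hstep _ h1)
      rw [h2] at this
      have := ih (by omega)
      omega
  have := key k le_rfl
  rwa [Nat.sub_self, h0] at this
end

section
/- Let δ'_G and δ'_Q be the degree sequences of graphs G and Q, each sorted in nonincreasing order and padded with zeros to common length |V| = max{|V_G|,|V_Q|}. If an edit path transforms G into Q by first deleting γ₁ edges and then inserting γ₂ edges (edge label substitutions do not change degrees), then γ₁ ≥ ⌈Σ_{i : δ'_G[i] > δ'_Q[i]} (δ'_G[i] − δ'_Q[i]) / 2⌉ and γ₂ ≥ ⌈Σ_{i : δ'_G[i] ≤ δ'_Q[i]} (δ'_Q[i] − δ'_G[i]) / 2⌉. -/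
open scoped Classical

/-- Shift lemma: inserting `b` into `l₂` while consing `x ≤ b` (with `x` below all of `l₂`)
onto `l₁` preserves pointwise domination. -/
private lemma ins_shift (b : ℕ) : ∀ {l₁ l₂ : List ℕ}, List.Forall₂ (· ≤ ·) l₁ l₂ →
    List.Pairwise (· ≤ ·) l₂ → ∀ x, x ≤ b → (∀ z ∈ l₂, x ≤ z) →
    List.Forall₂ (· ≤ ·) (x :: l₁) (List.orderedInsert (· ≤ ·) b l₂) := by
  intro l₁ l₂ h
  induction h with
  | nil => intro _ x hxb _; simpa using hxb
  | @cons p q l₁' l₂' hpq h ih =>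
    intro hs x hxb hhead
    simp only [List.orderedInsert]
    split
    · exact .cons hxb (.cons hpq h)
    · rename_i hbq
      have hqb : q ≤ b := le_of_lt (lt_of_not_ge hbq)
      refine .cons (hhead q (by simp)) (ih hs.of_cons p (hpq.trans hqb) ?_)
      intro z hz
      exact hpq.trans (List.rel_of_pairwise_cons hs hz)

/-- Shift lemma (other side): consing `q` onto `l₂` while inserting `a ≤ q` into `l₁`. -/
private lemma ins_shift' : ∀ {l₁ l₂ : List ℕ}, List.Forall₂ (· ≤ ·) l₁ l₂ →
    ∀ q, List.Pairwise (· ≤ ·) (q :: l₂) → ∀ a, a ≤ q →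
    List.Forall₂ (· ≤ ·) (List.orderedInsert (· ≤ ·) a l₁) (q :: l₂) := by
  intro l₁ l₂ h
  induction h with
  | nil => intro q _ a haq; simpa using haq
  | @cons p q' l₁' l₂' hpq h ih =>
    intro q hs a haq
    simp only [List.orderedInsert]
    split
    · exact .cons haq (.cons hpq h)
    · rename_i hap
      have hpa : p ≤ a := le_of_lt (lt_of_not_ge hap)
      refine .cons (hpa.trans haq) (ih q' hs.of_cons a (haq.trans ?_))
      exact List.rel_of_pairwise_cons hs (by simp : q' ∈ q' :: l₂')

/-- Monotonicity of ordered insertion with respect to pointwise domination. -/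
private lemma ins_mono : ∀ {l₁ l₂ : List ℕ}, List.Forall₂ (· ≤ ·) l₁ l₂ →
    List.Pairwise (· ≤ ·) l₂ → ∀ a b, a ≤ b →
    List.Forall₂ (· ≤ ·) (List.orderedInsert (· ≤ ·) a l₁)
      (List.orderedInsert (· ≤ ·) b l₂) := by
  intro l₁ l₂ h
  induction h with
  | nil => intro _ a b hab; simpa using hab
  | @cons p q l₁' l₂' hpq h ih =>
    intro hs a b hab
    simp only [List.orderedInsert]
    split
    · -- a ≤ p
      rename_i hap
      split
      · exact .cons hab (.cons hpq h)
      · rename_i hbq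
        have hqb : q ≤ b := le_of_lt (lt_of_not_ge hbq)
        refine .cons (hap.trans hpq) (ins_shift b h hs.of_cons p (hpq.trans hqb) ?_)
        intro z hz; exact hpq.trans (List.rel_of_pairwise_cons hs hz)
    · rename_i hap
      have hpa : p ≤ a := le_of_lt (lt_of_not_ge hap)
      split
      · rename_i hbq
        exact .cons (hpa.trans hab) (ins_shift' h q hs a (hab.trans hbq))
      · rename_i hbq
        exact .cons hpq (ih hs.of_cons a b hab)

private lemma sort_cons_eq (a : ℕ) (s : Multiset ℕ) :
    (a ::ₘ s).sort (· ≤ ·) = List.orderedInsert (· ≤ ·) a (s.sort (· ≤ ·)) := by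
  refine List.Perm.eq_of_pairwise' (Multiset.pairwise_sort _ _)
      (List.Pairwise.orderedInsert _ _ (Multiset.pairwise_sort s _)) ?_
  have h1 : ((a ::ₘ s).sort (· ≤ ·) : Multiset ℕ) = a ::ₘ s := Multiset.sort_eq _ _
  have h2 : (List.orderedInsert (· ≤ ·) a (s.sort (· ≤ ·)) : Multiset ℕ) = a ::ₘ s := by
      have := List.perm_orderedInsert (· ≤ ·) a (s.sort (· ≤ ·))
      rw [Multiset.coe_eq_coe.mpr this, ← Multiset.cons_coe, Multiset.sort_eq]
  exact Multiset.coe_eq_coe.mp (h1.trans h2.symm)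

/-- Sorted lists of pointwise-related multisets are pointwise related. -/
private lemma rel_sort {s t : Multiset ℕ} (h : Multiset.Rel (· ≤ ·) s t) :
    List.Forall₂ (· ≤ ·) (s.sort (· ≤ ·)) (t.sort (· ≤ ·)) := by
  induction h with
  | zero => simp
  | @cons a b s' t' hab h ih =>
    rw [sort_cons_eq, sort_cons_eq]
    exact ins_mono ih (Multiset.pairwise_sort _ _) a b hab

private lemma sum_getD (l : List ℕ) :
    ∑ i ∈ Finset.range l.length, l.getD i 0 = l.sum := by
  induction l with
  | nil => simp
  | cons a l ih =>
    rw [List.length_cons, Finset.sum_range_succ']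
    simp only [List.getD_cons_succ, List.getD_cons_zero, ih, List.sum_cons]
    omega

variable {V : Type*} [Fintype V] [DecidableEq V]

/-- The degree of vertex `u` in the edge set `E`: the number of edges adjacent to `u`. -/
noncomputable def degIn (E : Finset (Sym2 V)) (u : V) : ℕ :=
  (E.filter fun e => u ∈ e).card

/-- The degree sequence of the edge set `E`, sorted in nonincreasing order. Indexing it
with `List.getD · 0` pads it with zeros, so comparing two such sequences index-by-index
over `i < |V|` realizes the zero-padded sorted degree sequences `δ'_G`, `δ'_Q`. -/
noncomputable def degSeq (E : Finset (Sym2 V)) : List ℕ :=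
  ((Finset.univ.val.map (degIn E)).sort (· ≤ ·)).reverse

private lemma degSeq_length (E : Finset (Sym2 V)) : (degSeq E).length = Fintype.card V := by
  rw [degSeq, List.length_reverse, Multiset.length_sort, Multiset.card_map]
  rfl

private lemma degSeq_sum (E : Finset (Sym2 V)) :
    ∑ i ∈ Finset.range (Fintype.card V), (degSeq E).getD i 0 = ∑ u, degIn E u := by
  rw [← degSeq_length E, sum_getD]
  simp only [degSeq, List.sum_reverse]
  calc (((Finset.univ.val.map (degIn E)).sort (· ≤ ·))).sum
      = (((Finset.univ.val.map (degIn E)).sort (· ≤ ·) : Multiset ℕ)).sum := by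
        rw [Multiset.sum_coe]
    _ = (Finset.univ.val.map (degIn E)).sum := by rw [Multiset.sort_eq]
    _ = ∑ u, degIn E u := rfl

private lemma degSeq_dom {Ea Eb : Finset (Sym2 V)} (h : ∀ u, degIn Ea u ≤ degIn Eb u) :
    ∀ i, (degSeq Ea).getD i 0 ≤ (degSeq Eb).getD i 0 := by
  have hrel : Multiset.Rel (· ≤ ·) (Finset.univ.val.map (degIn Ea))
      (Finset.univ.val.map (degIn Eb)) := by
    rw [Multiset.rel_map]
    exact Multiset.rel_refl_of_refl_on fun u _ => h u
  have hf : List.Forall₂ (· ≤ ·) (degSeq Ea) (degSeq Eb) :=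
    List.rel_reverse (rel_sort hrel)
  intro i
  rcases List.forall₂_iff_get.mp hf with ⟨hlen, hget⟩
  by_cases hi : i < (degSeq Ea).length
  · rw [List.getD_eq_getElem _ _ hi, List.getD_eq_getElem _ _ (hlen ▸ hi)]
    exact hget i hi (hlen ▸ hi)
  · rw [List.getD_eq_default _ _ (le_of_not_gt hi)]
    exact Nat.zero_le _

private lemma degIn_mono {Ea Eb : Finset (Sym2 V)} (h : Ea ⊆ Eb) (u : V) :
    degIn Ea u ≤ degIn Eb u :=
  Finset.card_le_card (Finset.filter_subset_filter _ h)

private lemma degIn_sdiff {Ea Eb : Finset (Sym2 V)} (h : Ea ⊆ Eb) (u : V) :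
    degIn Eb u = degIn Ea u + degIn (Eb \ Ea) u := by
  unfold degIn
  rw [← Finset.card_union_of_disjoint, ← Finset.filter_union, Finset.union_sdiff_of_subset h]
  exact Finset.disjoint_filter_filter (Finset.disjoint_sdiff)

private lemma sum_degIn_le (D : Finset (Sym2 V)) : ∑ u, degIn D u ≤ 2 * D.card := by
  have : ∀ u, degIn D u = ∑ e ∈ D, if u ∈ e then 1 else 0 := by
    intro u; rw [degIn, Finset.card_filter]
  simp only [this]
  rw [Finset.sum_comm]
  have hb : ∀ e : Sym2 V, (∑ u : V, if u ∈ e then 1 else 0) ≤ 2 := by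
    intro e
    induction e using Sym2.inductionOn with
    | hf x y =>
      calc (∑ u : V, if u ∈ s(x, y) then 1 else 0)
          = (Finset.univ.filter (· ∈ s(x, y))).card := by
            rw [Finset.card_filter]
        _ ≤ ({x, y} : Finset V).card := by
            apply Finset.card_le_card
            intro u hu
            simp only [Finset.mem_filter, Sym2.mem_iff] at hu
            simp [hu.2]
        _ ≤ 2 := Finset.card_insert_le _ _ |>.trans (by simp)
  calc ∑ e ∈ D, (∑ u : V, if u ∈ e then 1 else 0) ≤ ∑ _e ∈ D, 2 :=
        Finset.sum_le_sum fun e _ => hb e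
    _ = 2 * D.card := by rw [Finset.sum_const, smul_eq_mul, mul_comm]

/-- Theorem 4: if an edit path transforms `G` into `Q` by first deleting
`γ₁` edges (giving intermediate edge set `E₁ ⊆ E_G`) and then inserting `γ₂` edges
(giving `E₂ ⊇ E₁`, whose degrees already agree with those of `Q`, since the remaining
edge-label substitutions do not change degrees), then
`γ₁ ≥ ⌈Σ_{δ'_G[i] > δ'_Q[i]} (δ'_G[i] − δ'_Q[i])/2⌉` and
`γ₂ ≥ ⌈Σ_{δ'_G[i] ≤ δ'_Q[i]} (δ'_Q[i] − δ'_G[i])/2⌉`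
(in ℕ, truncated subtraction gives the positive parts and `⌈x/2⌉ = (x+1)/2`). -/
theorem stmt13 (EG E₁ E₂ EQ : Finset (Sym2 V)) (γ₁ γ₂ : ℕ)
    (hdel : E₁ ⊆ EG) (hγ₁ : γ₁ = EG.card - E₁.card)
    (hins : E₁ ⊆ E₂) (hγ₂ : γ₂ = E₂.card - E₁.card)
    (hdeg : ∀ u, degIn E₂ u = degIn EQ u) :
    ((∑ i ∈ Finset.range (Fintype.card V),
        ((degSeq EG).getD i 0 - (degSeq EQ).getD i 0)) + 1) / 2 ≤ γ₁ ∧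
    ((∑ i ∈ Finset.range (Fintype.card V),
        ((degSeq EQ).getD i 0 - (degSeq EG).getD i 0)) + 1) / 2 ≤ γ₂ := by
  have hEQ : degSeq E₂ = degSeq EQ := by
    have : degIn E₂ = degIn EQ := funext hdeg
    rw [degSeq, degSeq, this]
  -- pointwise domination of padded sorted sequences
  have hC_A : ∀ i, (degSeq E₁).getD i 0 ≤ (degSeq EG).getD i 0 :=
    degSeq_dom (degIn_mono hdel)
  have hC_B : ∀ i, (degSeq E₁).getD i 0 ≤ (degSeq EQ).getD i 0 := by
    rw [← hEQ]; exact degSeq_dom (degIn_mono hins)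
  -- sums of sequences
  have hsum₁ : ∑ u, degIn EG u = ∑ u, degIn E₁ u + ∑ u, degIn (EG \ E₁) u := by
    rw [← Finset.sum_add_distrib]; exact Finset.sum_congr rfl fun u _ => degIn_sdiff hdel u
  have hsum₂ : ∑ u, degIn E₂ u = ∑ u, degIn E₁ u + ∑ u, degIn (E₂ \ E₁) u := by
    rw [← Finset.sum_add_distrib]; exact Finset.sum_congr rfl fun u _ => degIn_sdiff hins u
  have hb₁ : ∑ u, degIn (EG \ E₁) u ≤ 2 * γ₁ := by
    refine (sum_degIn_le _).trans ?_
    rw [Finset.card_sdiff_of_subset hdel, hγ₁]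
  have hb₂ : ∑ u, degIn (E₂ \ E₁) u ≤ 2 * γ₂ := by
    refine (sum_degIn_le _).trans ?_
    rw [Finset.card_sdiff_of_subset hins, hγ₂]
  -- first inequality
  have key : ∀ (X : Finset (Sym2 V)) (L : List ℕ) (γ : ℕ),
      (∀ i, (degSeq E₁).getD i 0 ≤ L.getD i 0) →
      (∑ i ∈ Finset.range (Fintype.card V), L.getD i 0 = ∑ u, degIn X u) →
      (∑ u, degIn X u = ∑ u, degIn E₁ u + ∑ u, degIn (X \ E₁) u) →
      (∑ u, degIn (X \ E₁) u ≤ 2 * γ) →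
      ∀ (M : List ℕ),
      (∀ i, (degSeq E₁).getD i 0 ≤ M.getD i 0) →
      ((∑ i ∈ Finset.range (Fintype.card V), (L.getD i 0 - M.getD i 0)) + 1) / 2 ≤ γ := by
    intro X L γ hCL hLsum hXsplit hXb M hCM
    have step1 : ∑ i ∈ Finset.range (Fintype.card V), (L.getD i 0 - M.getD i 0)
        ≤ ∑ i ∈ Finset.range (Fintype.card V), (L.getD i 0 - (degSeq E₁).getD i 0) :=
      Finset.sum_le_sum fun i _ => Nat.sub_le_sub_left (hCM i) _
    have step2 : ∑ i ∈ Finset.range (Fintype.card V), (L.getD i 0 - (degSeq E₁).getD i 0)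
        + ∑ i ∈ Finset.range (Fintype.card V), (degSeq E₁).getD i 0
        = ∑ i ∈ Finset.range (Fintype.card V), L.getD i 0 := by
      rw [← Finset.sum_add_distrib]
      exact Finset.sum_congr rfl fun i _ => Nat.sub_add_cancel (hCL i)
    have hE₁sum := degSeq_sum E₁
    omega
  constructor
  · exact key EG (degSeq EG) γ₁ hC_A (degSeq_sum EG) hsum₁ hb₁ (degSeq EQ) hC_B
  · refine key E₂ (degSeq EQ) γ₂ hC_B ?_ hsum₂ hb₂ (degSeq EG) hC_A
    rw [← hEQ]; exact degSeq_sum E₂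
end
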